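/- Fix positive integers n and N, a real p with 0 < p < 1, and x : Fin n → Bool. Let e₁, …, e_N be N independent erasure patterns of length n with parameter p. Then the probability that there exists x̃ : Fin n → Bool with x̃ ≠ x such that for every j ∈ {1,…,N} and every index i with x i ≠ x̃ i one has e_j i = true, is at most (1 + p^N)^n - 1. -/

import Mathlib

open MeasureTheory

/-- The Bernoulli measure on `Bool` giving probability `p` to `true` (an erased position). -/
noncomputable def bernoulliMeasure (p : ℝ) : Measure Bool :=
  ENNReal.ofReal p • Measure.dirac true + ENNReal.ofReal (1 - p) • Measure.dirac false

/-- An erasure pattern of length `n` with parameter `p`: the coordinates are independent,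
each erased (`= true`) with probability `p`. -/
noncomputable def erasureMeasure (n : ℕ) (p : ℝ) : Measure (Fin n → Bool) :=
  Measure.pi fun _ : Fin n => bernoulliMeasure p

/-!
Union bound over the competitors `x' ≠ x`. The patterns compatible with a given `x'` form a
box: every pattern must erase the `d = hammingDist x x'` positions where `x` and `x'` differ,
which has probability `(p ^ N) ^ d`. Summing `r ^ hammingDist x x'` over all `x'` factorizes
coordinatewise into `(1 + r) ^ n`, and removing the term `x' = x` leaves `(1 + p ^ N) ^ n - 1`.
-/

open Finset

section HammingSum

variable {ι β R : Type*} [Fintype ι] [DecidableEq β] [CommSemiring R]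

theorem pow_hammingDist_eq_prod (x y : ι → β) (r : R) :
    r ^ hammingDist x y = ∏ i, if x i ≠ y i then r else 1 := by
  rw [prod_ite, prod_const, prod_const_one, mul_one, hammingDist]

theorem sum_pow_hammingDist [DecidableEq ι] [Fintype β] (x : ι → β) (r : R) :
    ∑ y, r ^ hammingDist x y = (1 + (Fintype.card β - 1 : ℕ) * r) ^ Fintype.card ι := by
  have h_coord (a : β) :
      ∑ b, (if a ≠ b then r else 1) = 1 + (Fintype.card β - 1 : ℕ) * r := by
    rw [← add_sum_erase univ _ (mem_univ a), if_neg (not_not.mpr rfl),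
      sum_congr rfl fun b hb => if_pos (ne_of_mem_erase hb).symm, sum_const,
      card_erase_of_mem (mem_univ a), card_univ, nsmul_eq_mul]
  calc ∑ y, r ^ hammingDist x y = ∑ y : ι → β, ∏ i, if x i ≠ y i then r else 1 := by
        simp_rw [pow_hammingDist_eq_prod]
    _ = ∏ i, ∑ b, if x i ≠ b then r else 1 :=
        (Fintype.prod_sum fun i b => if x i ≠ b then r else 1).symm
    _ = _ := by rw [prod_congr rfl fun i _ => h_coord (x i), prod_const, card_univ]

end HammingSum

theorem sum_erase_pow_hammingDist_bool {ι : Type*} [Fintype ι] [DecidableEq ι] (x : ι → Bool)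
    (r : ENNReal) :
    ∑ y ∈ univ.erase x, r ^ hammingDist x y = (1 + r) ^ Fintype.card ι - 1 := by
  refine ENNReal.eq_sub_of_add_eq ENNReal.one_ne_top ?_
  have h_total := sum_pow_hammingDist x r
  rw [← add_sum_erase univ _ (mem_univ x), hammingDist_self, pow_zero] at h_total
  simpa [add_comm] using h_total

instance (p : ℝ) : IsFiniteMeasure (bernoulliMeasure p) where
  measure_univ_lt_top := by simp [bernoulliMeasure, ENNReal.add_lt_top]

theorem bernoulliMeasure_singleton_true (p : ℝ) :
    bernoulliMeasure p {true} = ENNReal.ofReal p := by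
  simp [bernoulliMeasure]

theorem bernoulliMeasure_univ {p : ℝ} (hp0 : 0 ≤ p) (hp1 : p ≤ 1) :
    bernoulliMeasure p Set.univ = 1 := by
  simp [bernoulliMeasure, ← ENNReal.ofReal_add hp0 (sub_nonneg.mpr hp1)]

theorem measure_pi_bernoulli_forall_mem_true {ι : Type*} [Fintype ι] {p : ℝ} (hp0 : 0 ≤ p)
    (hp1 : p ≤ 1) (D : Finset ι) :
    Measure.pi (fun _ : ι => bernoulliMeasure p) {e | ∀ i ∈ D, e i = true} =
      ENNReal.ofReal p ^ D.card := by
  classical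
  have h_box : {e : ι → Bool | ∀ i ∈ D, e i = true} =
      Set.pi Set.univ fun i => if i ∈ D then {true} else Set.univ := by
    ext e
    simp only [Set.mem_ofPred_eq, Set.mem_pi, Set.mem_univ, true_implies]
    refine forall_congr' fun i => ?_
    split_ifs <;> simp [*]
  rw [h_box, Measure.pi_pi]
  simp only [apply_ite, bernoulliMeasure_singleton_true, bernoulliMeasure_univ hp0 hp1,
    prod_ite_mem, univ_inter, prod_const]

theorem measure_pi_pi_bernoulli_compatible {κ ι : Type*} [Fintype κ] [Fintype ι] {p : ℝ}
    (hp0 : 0 ≤ p) (hp1 : p ≤ 1) (x x' : ι → Bool) :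
    Measure.pi (fun _ : κ => Measure.pi fun _ : ι => bernoulliMeasure p)
        {e | ∀ j i, x i ≠ x' i → e j i = true} =
      (ENNReal.ofReal p ^ Fintype.card κ) ^ hammingDist x x' := by
  classical
  have h_box : {e : κ → ι → Bool | ∀ j i, x i ≠ x' i → e j i = true} =
      Set.pi Set.univ fun _ => {e | ∀ i ∈ ({i | x i ≠ x' i} : Finset ι), e i = true} := by
    ext e
    simp [Set.mem_pi]
  rw [h_box, Measure.pi_pi, measure_pi_bernoulli_forall_mem_true hp0 hp1, prod_const, card_univ,
    ← pow_mul, ← pow_mul, mul_comm, hammingDist]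

theorem stmt_9_general (n N : ℕ) (p : ℝ) (hp0 : 0 < p) (hp1 : p < 1)
    (x : Fin n → Bool) :
    (Measure.pi fun _ : Fin N => erasureMeasure n p)
      {e : Fin N → Fin n → Bool | ∃ x' : Fin n → Bool, x' ≠ x ∧
        ∀ j : Fin N, ∀ i : Fin n, x i ≠ x' i → e j i = true}
      ≤ ENNReal.ofReal ((1 + p ^ N) ^ n - 1) := by
  set μ := Measure.pi fun _ : Fin N => erasureMeasure n p
  set compatible : (Fin n → Bool) → Set (Fin N → Fin n → Bool) :=
    fun x' => {e | ∀ j i, x i ≠ x' i → e j i = true}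
  calc _ ≤ μ (⋃ x' ∈ univ.erase x, compatible x') :=
        measure_mono <| by
          rintro e ⟨x', hx', he⟩
          exact Set.mem_biUnion (mem_erase.mpr ⟨hx', mem_univ x'⟩) he
    _ ≤ ∑ x' ∈ univ.erase x, μ (compatible x') := measure_biUnion_finset_le _ _
    _ = ∑ x' ∈ univ.erase x, (ENNReal.ofReal p ^ N) ^ hammingDist x x' := by
        simp only [μ, compatible, erasureMeasure,
          measure_pi_pi_bernoulli_compatible hp0.le hp1.le, Fintype.card_fin]
    _ = ENNReal.ofReal ((1 + p ^ N) ^ n - 1) := by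
        rw [sum_erase_pow_hammingDist_bool, Fintype.card_fin, ENNReal.ofReal_sub _ zero_le_one,
          ENNReal.ofReal_pow (by positivity), ENNReal.ofReal_add zero_le_one (by positivity),
          ENNReal.ofReal_pow hp0.le, ENNReal.ofReal_one]

/-- For `x : Fin n → Bool` and `N` independent erasure patterns
`e 0, …, e (N-1)` with parameter `p`, the probability that some `x̃ ≠ x` is compatible with
all `N` patterns (every index where `x` and `x̃` differ is erased in every pattern) is at
most `(1 + p^N)^n - 1`. -/
theorem stmt_9 (n N : ℕ) (hn : 0 < n) (hN : 0 < N) (p : ℝ) (hp0 : 0 < p) (hp1 : p < 1)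
    (x : Fin n → Bool) :
    (Measure.pi fun _ : Fin N => erasureMeasure n p)
      {e : Fin N → Fin n → Bool | ∃ x' : Fin n → Bool, x' ≠ x ∧
        ∀ j : Fin N, ∀ i : Fin n, x i ≠ x' i → e j i = true}
      ≤ ENNReal.ofReal ((1 + p ^ N) ^ n - 1) :=
  stmt_9_general n N p hp0 hp1 x
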